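/- Let p ∈ (1,∞), r > 0, λ ∈ ℝ \ {0}, and let v : ℝ^d → ℝ^m be Q₁-periodic and locally p-integrable. Then ∫_{B_{2r}} ∫_{Q₁} |(v(x+λξ)-v(x))/λ|^p dx dξ ≤ 2^{d+p} ∫_{B_r} ∫_{Q₁} |(v(x+λξ)-v(x))/λ|^p dx dξ, where B_r denotes the Euclidean ball of radius r centered at the origin in ℝ^d. -/

import Mathlib

/-!
The inner integral `F ξ = ∫_{Q₁} ‖λ⁻¹ • (v (x + λξ) - v x)‖ ^ p` satisfies `F (2ξ) ≤ 2 ^ p * F ξ`: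
split `v (x + 2λξ) - v x` at `x + λξ`; by periodicity, the piece `v (x + 2λξ) - v (x + λξ)` has the
same integral over the fundamental domain `Q₁` as `v (x + λξ) - v x`. Integrating over `B_r` and
substituting `ξ ↦ 2ξ`, which costs the Jacobian `2 ^ d`, gives the estimate. Since `v` is only
a.e. periodic, the translation invariance of integrals over `Q₁` is obtained by passing to an a.e.
equal, genuinely `ℤ^d`-invariant function, and `Q₁` is traded for the half-open unit cube.
-/

open MeasureTheory Set Metric Pointwise Submodule

theorem norm_add_rpow_le {F : Type*} [SeminormedAddCommGroup F] (a b : F) {p : ℝ} (hp : 1 ≤ p) :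
    ‖a + b‖ ^ p ≤ 2 ^ (p - 1) * (‖a‖ ^ p + ‖b‖ ^ p) := by
  have h := (NNReal.rpow_le_rpow (nnnorm_add_le a b) (by linarith)).trans
    (NNReal.rpow_add_le_mul_rpow_add_rpow ‖a‖₊ ‖b‖₊ hp)
  exact_mod_cast h

theorem norm_sub_rpow_le {F : Type*} [SeminormedAddCommGroup F] (a b : F) {p : ℝ} (hp : 1 ≤ p) :
    ‖a - b‖ ^ p ≤ 2 ^ (p - 1) * (‖a‖ ^ p + ‖b‖ ^ p) := by
  simpa [sub_eq_add_neg] using norm_add_rpow_le a (-b) hp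

section aePeriods

variable {G β : Type*} [AddCommGroup G] [MeasurableSpace G] [MeasurableAdd G]

def aePeriods (μ : Measure G) [μ.IsAddRightInvariant] (f : G → β) : AddSubgroup G where
  carrier := {y | ∀ᵐ x ∂μ, f (x + y) = f x}
  zero_mem' := by simp
  add_mem' {y z} (hy : ∀ᵐ x ∂μ, f (x + y) = f x) (hz : ∀ᵐ x ∂μ, f (x + z) = f x) := by
    change ∀ᵐ x ∂μ, f (x + (y + z)) = f x
    filter_upwards [(measurePreserving_add_right μ y).quasiMeasurePreserving.ae hz, hy]
      with x hz hy
    rw [← add_assoc, hz, hy]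
  neg_mem' {y} (hy : ∀ᵐ x ∂μ, f (x + y) = f x) := by
    change ∀ᵐ x ∂μ, f (x + -y) = f x
    filter_upwards [(measurePreserving_add_right μ (-y)).quasiMeasurePreserving.ae hy] with x hy
    rw [neg_add_cancel_right] at hy
    exact hy.symm

variable {μ : Measure G} [μ.IsAddRightInvariant] {f : G → β}

theorem mem_aePeriods {y : G} : y ∈ aePeriods μ f ↔ ∀ᵐ x ∂μ, f (x + y) = f x := Iff.rfl

theorem aePeriods_le_comp {γ : Type*} (φ : β → γ) : aePeriods μ f ≤ aePeriods μ (φ ∘ f) :=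
  fun _ hy => (mem_aePeriods.1 hy).mono fun x hx => by simp only [Function.comp_apply, hx]

theorem aePeriods_le_comp_add_prod (h : G) :
    aePeriods μ f ≤ aePeriods μ (fun x => (f (x + h), f x)) := fun y hy => by
  rw [mem_aePeriods] at hy ⊢
  filter_upwards [(measurePreserving_add_right μ h).quasiMeasurePreserving.ae hy, hy]
    with x hxh hx
  rw [add_right_comm, hxh, hx]

theorem aePeriods_le_norm_rpow {E : Type*} [SeminormedAddCommGroup E] {g : G → E} (p : ℝ) :
    aePeriods μ g ≤ aePeriods μ (fun x => ‖g x‖ ^ p) :=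
  aePeriods_le_comp fun z => ‖z‖ ^ p

theorem exists_ae_eq_forall_vadd_eq_of_le_aePeriods [Zero β] {L : AddSubgroup G} [Countable L]
    (hf : L ≤ aePeriods μ f) :
    ∃ f' : G → β, (∀ (g : L) x, f' (g +ᵥ x) = f' x) ∧ f' =ᵐ[μ] f := by
  set S := {x | ∀ g : L, f (g +ᵥ x) = f x}
  have hS : ∀ (g : L) x, x ∈ S → g +ᵥ x ∈ S := fun g x hx g' => by
    rw [vadd_vadd, hx, hx]
  refine ⟨S.indicator f, fun g x => ?_, ?_⟩
  · by_cases hx : x ∈ S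
    · rw [indicator_of_mem (hS g x hx), indicator_of_mem hx, hx]
    · have : g +ᵥ x ∉ S := fun h => hx (by simpa using hS (-g) _ h)
      rw [indicator_of_notMem this, indicator_of_notMem hx]
  · have hfL : ∀ g : L, ∀ᵐ x ∂μ, f (g +ᵥ x) = f x := fun g =>
      (mem_aePeriods.1 (hf g.2)).mono fun x hx => by
        rwa [AddSubgroup.vadd_def, vadd_eq_add, add_comm]
    filter_upwards [ae_all_iff.2 hfL] with x hx
    exact indicator_of_mem (show x ∈ S from hx) f

end aePeriods

namespace MeasureTheory.IsAddFundamentalDomain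

variable {G E : Type*} [AddCommGroup G] [MeasurableSpace G] [MeasurableAdd G]
  {μ : Measure G} [μ.IsAddLeftInvariant] {L : AddSubgroup G} [Countable L] {s : Set G}
  [NormedAddCommGroup E] {f : G → E}

theorem integrableOn_comp_add_right_iff (hs : IsAddFundamentalDomain L s μ)
    (hf : L ≤ aePeriods μ f) (τ : G) :
    IntegrableOn (fun x => f (x + τ)) s μ ↔ IntegrableOn f s μ := by
  obtain ⟨f', hf'L, hf'⟩ := exists_ae_eq_forall_vadd_eq_of_le_aePeriods hf
  have hτ : (fun x => f (x + τ)) = f ∘ (τ +ᵥ ·) := funext fun x => by simp [add_comm]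
  rw [hτ, ← (measurePreserving_vadd τ μ).integrableOn_image (measurableEmbedding_const_vadd τ),
    image_vadd, integrableOn_congr_fun_ae (ae_restrict_of_ae hf'.symm),
    (hs.vadd_of_comm τ).integrableOn_iff hs hf'L, integrableOn_congr_fun_ae (ae_restrict_of_ae hf')]

theorem setIntegral_comp_add_right [NormedSpace ℝ E] (hs : IsAddFundamentalDomain L s μ)
    (hf : L ≤ aePeriods μ f) (τ : G) :
    ∫ x in s, f (x + τ) ∂μ = ∫ x in s, f x ∂μ := by
  obtain ⟨f', hf'L, hf'⟩ := exists_ae_eq_forall_vadd_eq_of_le_aePeriods hf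
  calc ∫ x in s, f (x + τ) ∂μ = ∫ x in τ +ᵥ s, f x ∂μ := by
        simp_rw [← image_vadd, (measurePreserving_vadd τ μ).setIntegral_image_emb
          (measurableEmbedding_const_vadd τ), vadd_eq_add, add_comm]
    _ = ∫ x in τ +ᵥ s, f' x ∂μ := integral_congr_ae (ae_restrict_of_ae hf'.symm)
    _ = ∫ x in s, f' x ∂μ := (hs.vadd_of_comm τ).setIntegral_eq hs hf'L
    _ = ∫ x in s, f x ∂μ := integral_congr_ae (ae_restrict_of_ae hf')

variable {p : ℝ}

theorem integrableOn_norm_rpow_comp_add_right (hs : IsAddFundamentalDomain L s μ)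
    (hf : L ≤ aePeriods μ f) (hint : IntegrableOn (fun x => ‖f x‖ ^ p) s μ) (h : G) :
    IntegrableOn (fun x => ‖f (x + h)‖ ^ p) s μ :=
  (hs.integrableOn_comp_add_right_iff (hf.trans (aePeriods_le_norm_rpow p)) h).2 hint

theorem integrableOn_norm_sub_rpow (hs : IsAddFundamentalDomain L s μ) (hp : 1 ≤ p)
    (hf : L ≤ aePeriods μ f) (hfm : AEStronglyMeasurable f μ)
    (hint : IntegrableOn (fun x => ‖f x‖ ^ p) s μ) (h : G) :
    IntegrableOn (fun x => ‖f (x + h) - f x‖ ^ p) s μ := by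
  have hfh : AEStronglyMeasurable (fun x => f (x + h)) μ :=
    hfm.comp_quasiMeasurePreserving (measurePreserving_add_right μ h).quasiMeasurePreserving
  refine Integrable.mono'
    (((hs.integrableOn_norm_rpow_comp_add_right hf hint h).add hint).const_mul (2 ^ (p - 1)))
    ((hfh.sub hfm).norm.aemeasurable.pow_const p).aestronglyMeasurable.restrict
    (ae_of_all _ fun x => ?_)
  rw [Real.norm_of_nonneg (by positivity)]
  exact norm_sub_rpow_le _ _ hp

theorem integral_norm_sub_rpow_le (hs : IsAddFundamentalDomain L s μ) (hp : 1 ≤ p)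
    (hf : L ≤ aePeriods μ f) (hint : IntegrableOn (fun x => ‖f x‖ ^ p) s μ) (h : G) :
    ∫ x in s, ‖f (x + h) - f x‖ ^ p ∂μ ≤ 2 ^ p * ∫ x in s, ‖f x‖ ^ p ∂μ := by
  have hfh := hs.integrableOn_norm_rpow_comp_add_right hf hint h
  calc ∫ x in s, ‖f (x + h) - f x‖ ^ p ∂μ
      ≤ ∫ x in s, 2 ^ (p - 1) * (‖f (x + h)‖ ^ p + ‖f x‖ ^ p) ∂μ :=
        integral_mono_of_nonneg (ae_of_all _ fun x => by positivity)
          ((hfh.add hint).const_mul _) (ae_of_all _ fun x => norm_sub_rpow_le _ _ hp)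
    _ = 2 ^ (p - 1) * (2 * ∫ x in s, ‖f x‖ ^ p ∂μ) := by
        rw [integral_const_mul, integral_add hfh hint,
          hs.setIntegral_comp_add_right (hf.trans (aePeriods_le_norm_rpow p)), two_mul]
    _ = 2 ^ p * ∫ x in s, ‖f x‖ ^ p ∂μ := by
        rw [← mul_assoc, ← Real.rpow_add_one two_ne_zero, sub_add_cancel]

theorem integral_norm_sub_rpow_add_self_le (hs : IsAddFundamentalDomain L s μ) (hp : 1 ≤ p)
    (hf : L ≤ aePeriods μ f) (hfm : AEStronglyMeasurable f μ)
    (hint : IntegrableOn (fun x => ‖f x‖ ^ p) s μ) (h : G) :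
    ∫ x in s, ‖f (x + (h + h)) - f x‖ ^ p ∂μ ≤ 2 ^ p * ∫ x in s, ‖f (x + h) - f x‖ ^ p ∂μ := by
  set B := fun x => ‖f (x + h) - f x‖ ^ p
  have hB : L ≤ aePeriods μ B :=
    hf.trans <| (aePeriods_le_comp_add_prod h).trans <|
      aePeriods_le_comp fun z : E × E => ‖z.1 - z.2‖ ^ p
  have hBint : IntegrableOn B s μ := hs.integrableOn_norm_sub_rpow hp hf hfm hint h
  have hBh : IntegrableOn (fun x => B (x + h)) s μ :=
    (hs.integrableOn_comp_add_right_iff hB h).2 hBint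
  calc ∫ x in s, ‖f (x + (h + h)) - f x‖ ^ p ∂μ
      ≤ ∫ x in s, 2 ^ (p - 1) * (B (x + h) + B x) ∂μ := by
        refine integral_mono_of_nonneg (ae_of_all _ fun x => by positivity)
          ((hBh.add hBint).const_mul _) (ae_of_all _ fun x => ?_)
        simpa [B, ← add_assoc] using
          norm_add_rpow_le (f (x + h + h) - f (x + h)) (f (x + h) - f x) hp
    _ = 2 ^ (p - 1) * (2 * ∫ x in s, B x ∂μ) := by
        rw [integral_const_mul, integral_add hBh hBint, hs.setIntegral_comp_add_right hB, two_mul]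
    _ = 2 ^ p * ∫ x in s, B x ∂μ := by
        rw [← mul_assoc, ← Real.rpow_add_one two_ne_zero, sub_add_cancel]

end MeasureTheory.IsAddFundamentalDomain

theorem stronglyMeasurable_integral_norm_sub_rpow {G E : Type*} [AddCommGroup G]
    [MeasurableSpace G] [MeasurableAdd₂ G] {μ : Measure G} [SFinite μ] {s : Set G}
    [NormedAddCommGroup E] [MeasurableSpace E] [BorelSpace E] [SecondCountableTopology E]
    {f : G → E} (hf : Measurable f) (p : ℝ) :
    StronglyMeasurable fun h => ∫ x in s, ‖f (x + h) - f x‖ ^ p ∂μ :=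
  (show Measurable fun q : G × G => ‖f (q.2 + q.1) - f q.2‖ ^ p by fun_prop)
    |>.stronglyMeasurable.integral_prod_right'

theorem setIntegral_ball_two_mul_le {E : Type*} [NormedAddCommGroup E] [NormedSpace ℝ E]
    [FiniteDimensional ℝ E] [MeasurableSpace E] [BorelSpace E] (μ : Measure E)
    [μ.IsAddHaarMeasure] {F : E → ℝ} {c r : ℝ} (hF0 : ∀ ξ, 0 ≤ F ξ)
    (hF : ∀ ξ, F ((2 : ℝ) • ξ) ≤ c * F ξ) (hint : IntegrableOn F (ball 0 r) μ) :
    ∫ ξ in ball 0 (2 * r), F ξ ∂μ ≤ 2 ^ Module.finrank ℝ E * c * ∫ ξ in ball 0 r, F ξ ∂μ := by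
  have hscale : ∫ ξ in ball 0 (2 * r), F ξ ∂μ
      = 2 ^ Module.finrank ℝ E * ∫ ξ in ball 0 r, F ((2 : ℝ) • ξ) ∂μ := by
    rw [Measure.setIntegral_comp_smul_of_pos μ F _ two_pos, smul_ball two_ne_zero, smul_zero,
      Real.norm_two, smul_eq_mul, ← mul_assoc, mul_inv_cancel₀ (by positivity), one_mul]
  rw [hscale, mul_assoc, ← integral_const_mul c]
  refine mul_le_mul_of_nonneg_left ?_ (by positivity)
  exact integral_mono_of_nonneg (ae_of_all _ fun ξ => hF0 _) (hint.const_mul c) (ae_of_all _ hF)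

theorem MeasureTheory.IsAddFundamentalDomain.setIntegral_ball_two_mul_integral_norm_sub_rpow_le
    {E F : Type*} [NormedAddCommGroup E] [NormedSpace ℝ E] [FiniteDimensional ℝ E]
    [MeasurableSpace E] [BorelSpace E] {μ : Measure E} [μ.IsAddHaarMeasure]
    [NormedAddCommGroup F] [MeasurableSpace F] [BorelSpace F] [SecondCountableTopology F]
    {L : AddSubgroup E} [Countable L] {s : Set E} (hs : IsAddFundamentalDomain L s μ) {p : ℝ}
    (hp : 1 ≤ p) {f : E → F} (hf : L ≤ aePeriods μ f) (hfm : Measurable f)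
    (hint : IntegrableOn (fun x => ‖f x‖ ^ p) s μ) (lam r : ℝ) :
    ∫ ξ in ball 0 (2 * r), ∫ x in s, ‖f (x + lam • ξ) - f x‖ ^ p ∂μ ∂μ
      ≤ 2 ^ Module.finrank ℝ E * 2 ^ p *
          ∫ ξ in ball 0 r, ∫ x in s, ‖f (x + lam • ξ) - f x‖ ^ p ∂μ ∂μ := by
  refine setIntegral_ball_two_mul_le μ (fun ξ => integral_nonneg fun x => by positivity)
    (fun ξ => ?_) ?_
  · simpa only [two_smul, smul_add] using
      hs.integral_norm_sub_rpow_add_self_le hp hf hfm.aestronglyMeasurable hint (lam • ξ)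
  · refine Measure.integrableOn_of_bounded (M := 2 ^ p * ∫ x in s, ‖f x‖ ^ p ∂μ)
      measure_ball_lt_top.ne
      ((stronglyMeasurable_integral_norm_sub_rpow hfm p).comp_measurable
        (measurable_const_smul lam)).aestronglyMeasurable (ae_of_all _ fun ξ => ?_)
    rw [Real.norm_of_nonneg (integral_nonneg fun x => by positivity)]
    exact hs.integral_norm_sub_rpow_le hp hf hint _

namespace EuclideanSpace

variable {d : ℕ}

theorem unitCube_ae_eq_fundamentalDomain :
    {x : EuclideanSpace ℝ (Fin d) | ∀ i, x i ∈ Ioo (0 : ℝ) 1}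
      =ᵐ[volume] ZSpan.fundamentalDomain (EuclideanSpace.basisFun (Fin d) ℝ).toBasis := by
  have hQ : {x : EuclideanSpace ℝ (Fin d) | ∀ i, x i ∈ Ioo (0 : ℝ) 1}
      = WithLp.ofLp ⁻¹' univ.pi fun _ => Ioo 0 1 := by ext; simp
  have hD : ZSpan.fundamentalDomain (EuclideanSpace.basisFun (Fin d) ℝ).toBasis
      = WithLp.ofLp ⁻¹' univ.pi fun _ => Ico 0 1 := by ext; simp
  rw [hQ, hD]
  exact (PiLp.volume_preserving_ofLp _).quasiMeasurePreserving.preimage_ae_eq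
    (Measure.pi_Ioo_ae_eq_pi_Icc.trans Measure.pi_Ico_ae_eq_pi_Icc.symm)

theorem span_basisFun_le_aePeriods {β : Type*} {f : EuclideanSpace ℝ (Fin d) → β}
    (hf : ∀ i, ∀ᵐ x, f (x + EuclideanSpace.single i 1) = f x) :
    (span ℤ (range (EuclideanSpace.basisFun (Fin d) ℝ).toBasis)).toAddSubgroup
      ≤ aePeriods volume f := by
  rw [span_int_eq_addSubgroupClosure, AddSubgroup.closure_le]
  rintro _ ⟨i, rfl⟩
  simpa [mem_aePeriods] using hf i

end EuclideanSpace

theorem stmt1_general (d m : ℕ) (p : ℝ) (hp : 1 < p)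
    (r : ℝ) (lam : ℝ)
    (v : EuclideanSpace ℝ (Fin d) → EuclideanSpace ℝ (Fin m))
    (hv : Measurable v)
    (hper : ∀ i : Fin d, ∀ᵐ x : EuclideanSpace ℝ (Fin d),
      v (x + EuclideanSpace.single i (1:ℝ)) = v x)
    (hloc : ∀ K : Set (EuclideanSpace ℝ (Fin d)), IsCompact K →
      IntegrableOn (fun x => ‖v x‖ ^ p) K volume)
    (Q1 : Set (EuclideanSpace ℝ (Fin d)))
    (hQ1 : Q1 = {x | ∀ i, x i ∈ Set.Ioo (0:ℝ) 1}) :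
    (∫ ξ in ball (0 : EuclideanSpace ℝ (Fin d)) (2 * r),
        ∫ x in Q1, ‖lam⁻¹ • (v (x + lam • ξ) - v x)‖ ^ p)
      ≤ (2:ℝ) ^ ((d : ℝ) + p) *
        ∫ ξ in ball (0 : EuclideanSpace ℝ (Fin d)) r,
          ∫ x in Q1, ‖lam⁻¹ • (v (x + lam • ξ) - v x)‖ ^ p := by
  subst hQ1
  set b := (EuclideanSpace.basisFun (Fin d) ℝ).toBasis
  have : Countable (span ℤ (range b)).toAddSubgroup := inferInstanceAs (Countable (span ℤ _))
  set u := fun y => lam⁻¹ • v y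
  have hu : (span ℤ (range b)).toAddSubgroup ≤ aePeriods volume u :=
    (EuclideanSpace.span_basisFun_le_aePeriods hper).trans (aePeriods_le_comp _)
  have huint : IntegrableOn (fun x => ‖u x‖ ^ p) (ZSpan.fundamentalDomain b) := by
    simp only [u, norm_smul, Real.mul_rpow (norm_nonneg _) (norm_nonneg _)]
    exact ((hloc _ (ZSpan.fundamentalDomain_isBounded b).isCompact_closure).mono_set
      subset_closure).const_mul _
  have hcube : ∀ ξ,
      ∫ x in {x | ∀ i, x i ∈ Ioo (0 : ℝ) 1}, ‖lam⁻¹ • (v (x + lam • ξ) - v x)‖ ^ p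
        = ∫ x in ZSpan.fundamentalDomain b, ‖u (x + lam • ξ) - u x‖ ^ p := fun ξ => by
    simp only [u, smul_sub]
    exact setIntegral_congr_set EuclideanSpace.unitCube_ae_eq_fundamentalDomain
  simp only [hcube]
  have key := (ZSpan.isAddFundamentalDomain' b volume)
    |>.setIntegral_ball_two_mul_integral_norm_sub_rpow_le hp.le hu (by fun_prop) huint lam r
  rwa [finrank_euclideanSpace_fin, ← Real.rpow_natCast, ← Real.rpow_add two_pos] at key

/-- doubling estimate for difference quotients of a `Q₁`-periodic
locally `p`-integrable function. -/
theorem stmt1 (d m : ℕ) (hd : 1 ≤ d) (hm : 1 ≤ m) (p : ℝ) (hp : 1 < p)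
    (r : ℝ) (hr : 0 < r) (lam : ℝ) (hlam : lam ≠ 0)
    (v : EuclideanSpace ℝ (Fin d) → EuclideanSpace ℝ (Fin m))
    (hv : Measurable v)
    (hper : ∀ i : Fin d, ∀ᵐ x : EuclideanSpace ℝ (Fin d),
      v (x + EuclideanSpace.single i (1:ℝ)) = v x)
    (hloc : ∀ K : Set (EuclideanSpace ℝ (Fin d)), IsCompact K →
      IntegrableOn (fun x => ‖v x‖ ^ p) K volume)
    (Q1 : Set (EuclideanSpace ℝ (Fin d)))
    (hQ1 : Q1 = {x | ∀ i, x i ∈ Set.Ioo (0:ℝ) 1}) :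
    (∫ ξ in ball (0 : EuclideanSpace ℝ (Fin d)) (2 * r),
        ∫ x in Q1, ‖lam⁻¹ • (v (x + lam • ξ) - v x)‖ ^ p)
      ≤ (2:ℝ) ^ ((d : ℝ) + p) *
        ∫ ξ in ball (0 : EuclideanSpace ℝ (Fin d)) r,
          ∫ x in Q1, ‖lam⁻¹ • (v (x + lam • ξ) - v x)‖ ^ p :=
  stmt1_general d m p hp r lam v hv hper hloc Q1 hQ1
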